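/- arXiv:2306.03058 — 4 statements merged into one kernel-verified Lean document; each statement's English description precedes it below -/
import Mathlib

section
/- If a reliable-broadcast DAG satisfies Validity (an honest validator holding a vertex also holds its entire causal history) and Non-equivocation (any two honest validators holding a vertex from the same validator in the same round hold identical vertices), then it satisfies Completeness: any two honest validators holding the same vertex v have identical causal histories of v in their local views. -/
/-- Edges are recorded as the labels (author, round) of the parents, so a vertex of one view
may point to a differently-built vertex with the same label in another view. -/
structure Vertex (V : Type) where
  author : V
  round : ℕ
  payload : ℕ
  parents : Set (V × ℕ)

def edgeTo {V : Type} (u w : Vertex V) : Prop := (w.author, w.round) ∈ u.parents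

def causalHistory {V : Type} (view : Set (Vertex V)) (v : Vertex V) : Set (Vertex V) :=
  {u | u ∈ view ∧ Relation.ReflTransGen (fun a b => a ∈ view ∧ b ∈ view ∧ edgeTo a b) v u}

/-- Validity asks only for the parents; the whole causal history follows inductively. -/
def ValidView {V : Type} (view : Set (Vertex V)) : Prop :=
  ∀ u ∈ view, ∀ p ∈ u.parents, ∃ w ∈ view, (w.author, w.round) = p

section

variable {V : Type}

def NonEquivocating (view₁ view₂ : Set (Vertex V)) : Prop :=
  ∀ u ∈ view₁, ∀ w ∈ view₂, u.author = w.author → u.round = w.round → u = w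

theorem NonEquivocating.symm {view₁ view₂ : Set (Vertex V)}
    (h : NonEquivocating view₁ view₂) : NonEquivocating view₂ view₁ :=
  fun u hu w hw hauthor hround => (h w hw u hu hauthor.symm hround.symm).symm

/-- A parent of a vertex of `view₂` is held by `view₂` under its label; non-equivocation
makes that the very vertex `w` of `view₁`. -/
theorem NonEquivocating.mem_of_edgeTo {view₁ view₂ : Set (Vertex V)}
    (hnoneq : NonEquivocating view₁ view₂) (hvalid₂ : ValidView view₂) {u w : Vertex V}
    (hu : u ∈ view₂) (hw : w ∈ view₁) (huw : edgeTo u w) : w ∈ view₂ := by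
  obtain ⟨w', hw', hlabel⟩ := hvalid₂ u hu _ huw
  obtain ⟨hauthor, hround⟩ := Prod.mk.inj hlabel
  rwa [hnoneq w hw w' hw' hauthor.symm hround.symm]

theorem NonEquivocating.causalHistory_subset {view₁ view₂ : Set (Vertex V)}
    (hnoneq : NonEquivocating view₁ view₂) (hvalid₂ : ValidView view₂) {v : Vertex V}
    (hv₂ : v ∈ view₂) : causalHistory view₁ v ⊆ causalHistory view₂ v := by
  rintro u ⟨-, hreach⟩
  induction hreach with
  | refl => exact ⟨hv₂, .refl⟩
  | tail _ hstep ih =>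
    obtain ⟨-, hb₁, hedge⟩ := hstep
    obtain ⟨ha₂, hpath⟩ := ih
    have hb₂ := hnoneq.mem_of_edgeTo hvalid₂ ha₂ hb₁ hedge
    exact ⟨hb₂, hpath.tail ⟨ha₂, hb₂, hedge⟩⟩

end

/-- Completeness from Validity and Non-equivocation: two honest validators holding
the same vertex `v` have identical causal histories of `v`. -/
theorem completeness_of_validity_nonequivocation {V : Type}
    (view₁ view₂ : Set (Vertex V))
    (hvalid₁ : ValidView view₁) (hvalid₂ : ValidView view₂)
    (hnoneq : ∀ u ∈ view₁, ∀ w ∈ view₂,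
      u.author = w.author → u.round = w.round → u = w)
    (v : Vertex V) (hv₁ : v ∈ view₁) (hv₂ : v ∈ view₂) :
    causalHistory view₁ v = causalHistory view₂ v :=
  have hnoneq : NonEquivocating view₁ view₂ := hnoneq
  (hnoneq.causalHistory_subset hvalid₂ hv₂).antisymm
    (hnoneq.symm.causalHistory_subset hvalid₁ hv₁)
end

section
/- Let P be an anchor-ordering protocol with the first-anchor agreement property: whenever all honest validators use the same round-to-anchor mapping F starting from a common round, they agree on the first anchor each of them orders. Then in the Shoal composition—where validators repeatedly run P from a current round with a mapping F deterministically derived from previously ordered anchors' causal histories, order the first ordered anchor, and restart P from the next round—the locally ordered lists of anchors of any two honest validators are such that one is a prefix of the other. -/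
/-- The Shoal state after `k` completed instances: the current anchor-selection
mapping `F` and the current starting round. `P view r F` returns the first ordered
anchor of the instance of the underlying protocol started at round `r` with
mapping `F`, together with its round. The next mapping is derived deterministically
(`upd`) from the ordered anchor (by Completeness, its causal history is agreed upon,
so it is a function of the anchor). -/
def shoalState {View A : Type}
    (P : View → ℕ → (ℕ → A) → A × ℕ) (view : View)
    (F₀ : ℕ → A) (upd : A → (ℕ → A)) : ℕ → (ℕ → A) × ℕ
  | 0 => (F₀, 0)
  | k + 1 =>
      let s := shoalState P view F₀ upd k
      let o := P view s.2 s.1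
      (upd o.1, o.2 + 1)

/-- The `k`-th anchor ordered in the Shoal composition, with its round. -/
def shoalAnchor {View A : Type}
    (P : View → ℕ → (ℕ → A) → A × ℕ) (view : View)
    (F₀ : ℕ → A) (upd : A → (ℕ → A)) (k : ℕ) : A × ℕ :=
  P view (shoalState P view F₀ upd k).2 (shoalState P view F₀ upd k).1

section ShoalComposition

variable {View A : Type} {P : View → ℕ → (ℕ → A) → A × ℕ} {v w : View}

theorem shoalState_eq_of_forall_eq (hP : ∀ r F, P v r F = P w r F)
    (F₀ : ℕ → A) (upd : A → (ℕ → A)) (k : ℕ) :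
    shoalState P v F₀ upd k = shoalState P w F₀ upd k := by
  induction k with
  | zero => rfl
  | succ k ih => simp only [shoalState, ih, hP]

theorem shoalAnchor_eq_of_forall_eq (hP : ∀ r F, P v r F = P w r F)
    (F₀ : ℕ → A) (upd : A → (ℕ → A)) (k : ℕ) :
    shoalAnchor P v F₀ upd k = shoalAnchor P w F₀ upd k := by
  rw [shoalAnchor, shoalAnchor, shoalState_eq_of_forall_eq hP, hP]

end ShoalComposition

/-- Shoal prefix agreement: if the underlying protocol `P` satisfies first-anchor
agreement (honest validators starting from a common round with a common mapping
order the same first anchor, in the same round), then in the Shoal composition all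
honest validators order the same sequence of anchors; in particular any two honest
validators' ordered anchor lists are prefix-compatible. -/
theorem shoal_prefix_agreement {View A I : Type}
    (P : View → ℕ → (ℕ → A) → A × ℕ)
    (views : I → View) (Honest : Set I)
    (F₀ : ℕ → A) (upd : A → (ℕ → A))
    (hFirstAnchorAgreement : ∀ (r : ℕ) (F : ℕ → A), ∀ i ∈ Honest, ∀ j ∈ Honest,
      P (views i) r F = P (views j) r F) :
    ∀ i ∈ Honest, ∀ j ∈ Honest, ∀ k : ℕ,
      shoalAnchor P (views i) F₀ upd k = shoalAnchor P (views j) F₀ upd k :=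
  fun i hi j hj =>
    shoalAnchor_eq_of_forall_eq (fun r F => hFirstAnchorAgreement r F i hi j hj) F₀ upd
end

section
/- Under the assumptions of the Shoal prefix-agreement lemma, and additionally assuming each validator orders vertices by sequentially processing its ordered anchors and appending the not-yet-ordered vertices of each anchor's causal history according to a fixed deterministic rule, the total orders produced by any two honest validators agree: one validator's ordered sequence of vertices is a prefix of the other's. -/
/-- Process one ordered anchor: append the deterministic sequencing of the
not-yet-ordered part of its causal history, and record those vertices as ordered. -/
def stepOrder {A X : Type} [DecidableEq X]
    (hist : A → Finset X) (ord : Finset X → List X)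
    (acc : List X × Finset X) (a : A) : List X × Finset X :=
  (acc.1 ++ ord (hist a \ acc.2), acc.2 ∪ hist a)

/-- The total vertex ordering produced from a list of ordered anchors by
sequentially processing them with the deterministic rule `ord`. -/
def totalOrder {A X : Type} [DecidableEq X]
    (hist : A → Finset X) (ord : Finset X → List X) (anchors : List A) : List X :=
  (anchors.foldl (stepOrder hist ord) ([], ∅)).1

/-! Each anchor only appends to the output, and both validators run the same
deterministic fold from the same initial state, so processing a longer anchor list
extends the output of a shorter one: the fold over `l₁ ++ t` is the fold over `t`
started from the state reached after `l₁`. -/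

theorem List.prefix_foldl_fst {α β γ : Type*} (f : List γ × β → α → List γ × β)
    (hf : ∀ acc a, acc.1 <+: (f acc a).1) (l : List α) (acc : List γ × β) :
    acc.1 <+: (l.foldl f acc).1 := by
  induction l generalizing acc with
  | nil => exact List.prefix_rfl
  | cons a t ih => exact (hf acc a).trans (ih (f acc a))

theorem prefix_stepOrder_fst {A X : Type} [DecidableEq X]
    (hist : A → Finset X) (ord : Finset X → List X) (acc : List X × Finset X) (a : A) :
    acc.1 <+: (stepOrder hist ord acc a).1 :=
  List.prefix_append _ _

theorem totalOrder_prefix_of_prefix {A X : Type} [DecidableEq X]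
    (hist : A → Finset X) (ord : Finset X → List X) {l₁ l₂ : List A} (h : l₁ <+: l₂) :
    totalOrder hist ord l₁ <+: totalOrder hist ord l₂ := by
  obtain ⟨t, rfl⟩ := h
  rw [totalOrder, totalOrder, List.foldl_append]
  exact List.prefix_foldl_fst _ (prefix_stepOrder_fst hist ord) t _

/-- If two honest validators' ordered anchor lists are prefix-compatible (as
guaranteed by the Shoal prefix-agreement lemma), and both use the same agreed
causal-history function (DAG Completeness) and the same deterministic sequencing
rule, then the total vertex orderings they produce are prefix-compatible. -/
theorem shoal_total_order_prefix {A X : Type} [DecidableEq X]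
    (hist : A → Finset X) (ord : Finset X → List X)
    (anchors₁ anchors₂ : List A)
    (hprefix : anchors₁ <+: anchors₂ ∨ anchors₂ <+: anchors₁) :
    totalOrder hist ord anchors₁ <+: totalOrder hist ord anchors₂ ∨
      totalOrder hist ord anchors₂ <+: totalOrder hist ord anchors₁ :=
  hprefix.imp (totalOrder_prefix_of_prefix hist ord) (totalOrder_prefix_of_prefix hist ord)
end

section
/- In a round-based DAG with n validators where advancing to round r requires receiving n-f distinct-author vertices of round r-1, if at least n-f honest validators broadcast a vertex in every round and all broadcasts are eventually delivered, then every honest validator advances through infinitely many rounds (the DAG construction is live without timeouts). -/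
theorem dag_construction_live_without_timeouts_general
    {n f : ℕ} {V : Type}
    (Honest : Finset V) (hHonest : n - f ≤ Honest.card)
    (enters : V → ℕ → Prop) (delivered : V → V → ℕ → Prop)
    -- honest validators broadcast in every round they enter, and honest
    -- broadcasts are eventually delivered to all honest validators:
    (hbcast : ∀ v ∈ Honest, ∀ r, enters v r → ∀ i ∈ Honest, delivered i v r)
    -- a validator enters round r+1 once it has received n - f
    -- distinct-author round-r vertices:
    (hadv : ∀ i : V, ∀ r : ℕ,
      (∃ S : Finset V, n - f ≤ S.card ∧ ∀ v ∈ S, delivered i v r) → enters i (r + 1))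
    -- every honest validator starts in round 0:
    (hbase : ∀ i ∈ Honest, enters i 0) :
    ∀ i ∈ Honest, ∀ r : ℕ, enters i r := by
  intro i hi r
  induction r generalizing i with
  | zero => exact hbase i hi
  | succ r ih =>
    -- the round-r vertices of the honest validators alone reach the threshold
    exact hadv i r ⟨Honest, hHonest, fun v hv => hbcast v hv r (ih v hv) i hi⟩

/-- Liveness of the DAG construction without timeouts: with `n` validators of which
at least `n - f` are honest and broadcast a vertex in every round they reach, and
with eventual delivery of honest broadcasts, every honest validator advances through
every round.  `enters i r` means validator `i` (eventually) enters round `r`;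
`delivered i v r` means `i` eventually receives `v`'s round-`r` vertex. -/
theorem dag_construction_live_without_timeouts
    {n f : ℕ} {V : Type} [Fintype V] (hn : Fintype.card V = n)
    (Honest : Finset V) (hHonest : n - f ≤ Honest.card)
    (enters : V → ℕ → Prop) (delivered : V → V → ℕ → Prop)
    -- honest validators broadcast in every round they enter, and honest
    -- broadcasts are eventually delivered to all honest validators:
    (hbcast : ∀ v ∈ Honest, ∀ r, enters v r → ∀ i ∈ Honest, delivered i v r)
    -- a validator enters round r+1 once it has received n - f
    -- distinct-author round-r vertices:
    (hadv : ∀ i : V, ∀ r : ℕ,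
      (∃ S : Finset V, n - f ≤ S.card ∧ ∀ v ∈ S, delivered i v r) → enters i (r + 1))
    -- every honest validator starts in round 0:
    (hbase : ∀ i ∈ Honest, enters i 0) :
    ∀ i ∈ Honest, ∀ r : ℕ, enters i r :=
  dag_construction_live_without_timeouts_general Honest hHonest enters delivered hbcast hadv hbase
end
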